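/- arXiv:1911.03939 — 2 statements merged into one kernel-verified Lean document; each statement's English description precedes it below -/
import Mathlib

section
/- Let H and L be Hopf algebras, λ : H → k a linear map with λ(1_H) = 1 and λ(h)λ(g) = Σ λ(h₁)λ(h₂g), and z ∈ L with ε_L(z) = 1 and z ⊗ z = Δ_L(z)(1_L ⊗ z). Define the partial action h ⇀ x = λ(h)x of H on L and the partial coaction ρ(h) = h ⊗ z of L on H. Then (H, L) is a quasi-abelian partial matched pair if and only if z is central in L and Σ λ(h₁)h₂ = Σ h₁λ(h₂) for all h ∈ H. -/
open TensorProduct LinearMap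

namespace PartialHopf

variable (k : Type*) [Field k]

section Action

variable (H A : Type*) [Ring H] [HopfAlgebra k H] [Ring A] [Algebra k A]

/-- `A` is a left partial `H`-module algebra via the bilinear action `act`
(Definition 2.1 / Caenepeel-Janssen): `1 ⇀ a = a`,
`h ⇀ (ab) = Σ (h₁ ⇀ a)(h₂ ⇀ b)` and `h ⇀ (g ⇀ a) = Σ (h₁ ⇀ 1)(h₂g ⇀ a)`. -/
structure IsPartialAction (act : H →ₗ[k] A →ₗ[k] A) : Prop where
  one_act : ∀ a : A, act 1 a = a
  act_mul : ∀ (h : H) (a b : A), act h (a * b)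
      = LinearMap.mul' k A
          ((TensorProduct.map (act.flip a) (act.flip b)) (Coalgebra.comul (R := k) h))
  act_act : ∀ (h g : H) (a : A), act h (act g a)
      = LinearMap.mul' k A
          ((TensorProduct.map (act.flip 1) ((act.flip a) ∘ₗ (LinearMap.mulRight k g)))
            (Coalgebra.comul (R := k) h))

end Action

section Coaction

variable (H C : Type*) [Ring H] [HopfAlgebra k H]
  [AddCommGroup C] [Module k C] [Coalgebra k C]

/-- Auxiliary map sending `Σ c ⊗ d` to `Σ c⁰ ⊗ d⁰ ⊗ c¹d¹`. -/
noncomputable def coactPairMul (ρ : C →ₗ[k] C ⊗[k] H) :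
    C ⊗[k] C →ₗ[k] (C ⊗[k] C) ⊗[k] H :=
  (LinearMap.lTensor (C ⊗[k] C) (LinearMap.mul' k H))
    ∘ₗ (TensorProduct.tensorTensorTensorComm k C H C H).toLinearMap
    ∘ₗ (TensorProduct.map ρ ρ)

/-- Auxiliary map sending `c` to `Σ c₁⁰ ⊗ (c₁¹)₁ ⊗ (c₁¹)₂ ε_C(c₂⁰) c₂¹`. -/
noncomputable def coactRight (ρ : C →ₗ[k] C ⊗[k] H) : C →ₗ[k] (C ⊗[k] H) ⊗[k] H :=
  (TensorProduct.assoc k C H H).symm.toLinearMap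
    ∘ₗ (LinearMap.lTensor C
        ((LinearMap.lTensor H (LinearMap.mul' k H)) ∘ₗ (TensorProduct.assoc k H H H).toLinearMap))
    ∘ₗ (TensorProduct.assoc k C (H ⊗[k] H) H).toLinearMap
    ∘ₗ (TensorProduct.map ((LinearMap.lTensor C (Coalgebra.comul (R := k))) ∘ₗ ρ)
          ((TensorProduct.lid k H).toLinearMap
            ∘ₗ (LinearMap.rTensor H (Coalgebra.counit (R := k))) ∘ₗ ρ))
    ∘ₗ (Coalgebra.comul (R := k))

/-- `C` is a right partial `H`-comodule coalgebra via `ρ` (Definition 2.3 / Batista-Vercruysse):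
`(id ⊗ ε_H)ρ(c) = c`, `(Δ_C ⊗ id)ρ(c) = Σ c₁⁰ ⊗ c₂⁰ ⊗ c₁¹c₂¹` and
`(ρ ⊗ id)ρ(c) = Σ c₁⁰ ⊗ (c₁¹)₁ ⊗ (c₁¹)₂ ε_C(c₂⁰)c₂¹`. -/
structure IsPartialCoaction (ρ : C →ₗ[k] C ⊗[k] H) : Prop where
  tensor_counit : ∀ c : C,
    (TensorProduct.rid k C) ((LinearMap.lTensor C (Coalgebra.counit (R := k))) (ρ c)) = c
  comul_coact : ∀ c : C,
    (LinearMap.rTensor H (Coalgebra.comul (R := k))) (ρ c)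
      = coactPairMul k H C ρ (Coalgebra.comul (R := k) c)
  coact_coact : ∀ c : C,
    (LinearMap.rTensor H ρ) (ρ c) = coactRight k H C ρ c

end Coaction

end PartialHopf
namespace PartialHopf
variable (k : Type*) [Field k]

section MatchedPair

variable (H L : Type*) [Ring H] [HopfAlgebra k H] [Ring L] [HopfAlgebra k L]

/-- Generic swap `(m ⊗ n) ⊗ p ↦ (m ⊗ p) ⊗ n`. -/
noncomputable def swapR (M N P : Type*) [AddCommGroup M] [AddCommGroup N] [AddCommGroup P]
    [Module k M] [Module k N] [Module k P] :
    (M ⊗[k] N) ⊗[k] P →ₗ[k] (M ⊗[k] P) ⊗[k] N :=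
  (TensorProduct.assoc k M P N).symm.toLinearMap
    ∘ₗ (LinearMap.lTensor M (TensorProduct.comm k N P).toLinearMap)
    ∘ₗ (TensorProduct.assoc k M N P).toLinearMap

variable {H L}

/-- The bilinear action as a map on the tensor product. -/
noncomputable def actT (act : H →ₗ[k] L →ₗ[k] L) : H ⊗[k] L →ₗ[k] L :=
  TensorProduct.lift act

/-- Shuffle `(x₁ ⊗ x₂) ⊗ (a ⊗ y) ↦ a ⊗ (x₁ ⊗ x₂y)`. -/
noncomputable def psiMap : (L ⊗[k] L) ⊗[k] (H ⊗[k] L) →ₗ[k] H ⊗[k] (L ⊗[k] L) :=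
  (TensorProduct.assoc k H L L).toLinearMap
    ∘ₗ (TensorProduct.map (TensorProduct.comm k L H).toLinearMap (LinearMap.mul' k L))
    ∘ₗ (TensorProduct.tensorTensorTensorComm k L L H L).toLinearMap

/-- `h ↦ Σ (h₂g)⁰ ⊗ (h₁ ⇀ x)₁ ⊗ (h₁ ⇀ x)₂ (h₂g)¹`: the left hand side of the
compatibility condition (iii) of a partial matched pair. -/
noncomputable def mpLHS (act : H →ₗ[k] L →ₗ[k] L) (ρ : H →ₗ[k] H ⊗[k] L) (g : H) (x : L) :
    H →ₗ[k] H ⊗[k] (L ⊗[k] L) :=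
  psiMap k ∘ₗ (TensorProduct.map ((Coalgebra.comul (R := k)) ∘ₗ act.flip x)
      (ρ ∘ₗ LinearMap.mulRight k g)) ∘ₗ (Coalgebra.comul (R := k))

/-- `h ⊗ x ↦ (h⁰ ⇀ x) ⊗ h¹`. -/
noncomputable def phiB (act : H →ₗ[k] L →ₗ[k] L) (ρ : H →ₗ[k] H ⊗[k] L) :
    H ⊗[k] L →ₗ[k] L ⊗[k] L :=
  (LinearMap.rTensor L (actT k act)) ∘ₗ (swapR k H L L) ∘ₗ (LinearMap.rTensor L ρ)

/-- `(h₁ ⊗ h₂) ⊗ (x₁ ⊗ x₂) ↦ (h₁⁰ ⇀ x₁) ⊗ h₁¹(h₂ ⇀ x₂)`. -/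
noncomputable def bAssemble (act : H →ₗ[k] L →ₗ[k] L) (ρ : H →ₗ[k] H ⊗[k] L) :
    (H ⊗[k] H) ⊗[k] (L ⊗[k] L) →ₗ[k] L ⊗[k] L :=
  (LinearMap.lTensor L (LinearMap.mul' k L))
    ∘ₗ (TensorProduct.assoc k L L L).toLinearMap
    ∘ₗ (TensorProduct.map (phiB k act ρ) (actT k act))
    ∘ₗ (TensorProduct.tensorTensorTensorComm k H H L L).toLinearMap

/-- `h ↦ Σ (h₁⁰ ⇀ x₁) ⊗ h₁¹(h₂ ⇀ x₂)`. -/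
noncomputable def betaMap (act : H →ₗ[k] L →ₗ[k] L) (ρ : H →ₗ[k] H ⊗[k] L) (x : L) :
    H →ₗ[k] L ⊗[k] L :=
  (bAssemble k act ρ)
    ∘ₗ ((TensorProduct.mk k (H ⊗[k] H) (L ⊗[k] L)).flip (Coalgebra.comul (R := k) x))
    ∘ₗ (Coalgebra.comul (R := k))

/-- `h₁ ⊗ g ↦ h₁⁰g ⊗ h₁¹`. -/
noncomputable def phiC (ρ : H →ₗ[k] H ⊗[k] L) : H ⊗[k] H →ₗ[k] H ⊗[k] L :=
  (LinearMap.rTensor L (LinearMap.mul' k H)) ∘ₗ (swapR k H L H) ∘ₗ (LinearMap.rTensor H ρ)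

/-- `(h₁ ⊗ h₂) ⊗ (g⁰ ⊗ g¹) ↦ h₁⁰g⁰ ⊗ h₁¹(h₂ ⇀ g¹)`. -/
noncomputable def cAssemble (act : H →ₗ[k] L →ₗ[k] L) (ρ : H →ₗ[k] H ⊗[k] L) :
    (H ⊗[k] H) ⊗[k] (H ⊗[k] L) →ₗ[k] H ⊗[k] L :=
  (LinearMap.lTensor H (LinearMap.mul' k L))
    ∘ₗ (TensorProduct.assoc k H L L).toLinearMap
    ∘ₗ (TensorProduct.map (phiC k ρ) (actT k act))
    ∘ₗ (TensorProduct.tensorTensorTensorComm k H H H L).toLinearMap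

/-- `h ↦ Σ h₁⁰g⁰ ⊗ h₁¹(h₂ ⇀ g¹)`. -/
noncomputable def gammaMap (act : H →ₗ[k] L →ₗ[k] L) (ρ : H →ₗ[k] H ⊗[k] L) (g : H) :
    H →ₗ[k] H ⊗[k] L :=
  (cAssemble k act ρ)
    ∘ₗ ((TensorProduct.mk k (H ⊗[k] H) (H ⊗[k] L)).flip (ρ g))
    ∘ₗ (Coalgebra.comul (R := k))

/-- `h ↦ Σ h₃⁰g⁰ ⊗ (h₁⁰ ⇀ x₁) ⊗ h₁¹(h₂ ⇀ x₂)h₃¹(h₄ ⇀ g¹)`: the right hand side of the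
compatibility condition (iii) of a partial matched pair. -/
noncomputable def mpRHS (act : H →ₗ[k] L →ₗ[k] L) (ρ : H →ₗ[k] H ⊗[k] L) (g : H) (x : L) :
    H →ₗ[k] H ⊗[k] (L ⊗[k] L) :=
  psiMap k ∘ₗ (TensorProduct.map (betaMap k act ρ x) (gammaMap k act ρ g))
    ∘ₗ (Coalgebra.comul (R := k))

/-- `h ↦ Σ ε_H(h⁰) h¹`. -/
noncomputable def coactCounit (ρ : H →ₗ[k] H ⊗[k] L) : H →ₗ[k] L :=
  (TensorProduct.lid k L).toLinearMap
    ∘ₗ (LinearMap.rTensor L (Coalgebra.counit (R := k))) ∘ₗ ρ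

variable (H L)

/-- Definition 3.1: `(H, L)` is a partial matched pair of Hopf algebras. -/
structure IsPartialMatchedPair (act : H →ₗ[k] L →ₗ[k] L) (ρ : H →ₗ[k] H ⊗[k] L) : Prop where
  action : IsPartialAction k H L act
  coaction : IsPartialCoaction k L H ρ
  compat : ∀ (h g : H) (x : L), mpLHS k act ρ g x h = mpRHS k act ρ g x h
  counit_act : ∀ (h : H) (x : L),
    Coalgebra.counit (R := k) (act h x)
      = Coalgebra.counit (R := k) (act h 1) * Coalgebra.counit (R := k) x
  coact_one : ρ 1 = (1 : H) ⊗ₜ[k] (coactCounit k ρ (1 : H))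

/-- Definition 3.5: quasi-abelian condition
`Σ h₂⁰ ⊗ (h₁ ⇀ x)h₂¹ = Σ h₁⁰ ⊗ h₁¹(h₂ ⇀ x)`. -/
def IsQuasiAbelian (act : H →ₗ[k] L →ₗ[k] L) (ρ : H →ₗ[k] H ⊗[k] L) : Prop :=
  ∀ (h : H) (x : L),
    ((LinearMap.lTensor H (LinearMap.mul' k L))
        ∘ₗ (TensorProduct.assoc k H L L).toLinearMap
        ∘ₗ (LinearMap.rTensor L (TensorProduct.comm k L H).toLinearMap)
        ∘ₗ (TensorProduct.assoc k L H L).symm.toLinearMap)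
      ((TensorProduct.map (act.flip x) ρ) (Coalgebra.comul (R := k) h))
    = ((LinearMap.lTensor H (LinearMap.mul' k L))
        ∘ₗ (TensorProduct.assoc k H L L).toLinearMap)
      ((TensorProduct.map ρ (act.flip x)) (Coalgebra.comul (R := k) h))

end MatchedPair

section Helpers

variable {k H L : Type*} [Field k] [Ring H] [HopfAlgebra k H] [Ring L] [HopfAlgebra k L]

lemma psiMap_tmul (u : L ⊗[k] L) (c : H) (y : L) :
    psiMap k (u ⊗ₜ[k] (c ⊗ₜ[k] y))
      = c ⊗ₜ[k] ((LinearMap.lTensor L (LinearMap.mulRight k y)) u) := by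
  induction u with
  | zero => simp
  | tmul p q => simp [psiMap]
  | add u v hu hv => simp only [add_tmul, map_add, tmul_add, hu, hv]

lemma mulRight_tensor_eq (z : L) (u : L ⊗[k] L) :
    (LinearMap.lTensor L (LinearMap.mulRight k z)) u = u * ((1 : L) ⊗ₜ[k] z) := by
  induction u with
  | zero => simp
  | tmul p q => simp [Algebra.TensorProduct.tmul_mul_tmul]
  | add u v hu hv => simp only [map_add, add_mul, hu, hv]

lemma z_idem {z : L} (hz1 : Coalgebra.counit (R := k) z = 1)
    (hz2 : z ⊗ₜ[k] z = Coalgebra.comul (R := k) z * ((1 : L) ⊗ₜ[k] z)) :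
    z * z = z := by
  have key : ∀ u : L ⊗[k] L,
      (TensorProduct.lid k L) ((LinearMap.rTensor L (Coalgebra.counit (R := k)))
        (u * ((1 : L) ⊗ₜ[k] z)))
      = (TensorProduct.lid k L) ((LinearMap.rTensor L (Coalgebra.counit (R := k))) u) * z := by
    intro u
    induction u with
    | zero => simp
    | tmul p q =>
        simp [Algebra.TensorProduct.tmul_mul_tmul, smul_mul_assoc]
    | add u v hu hv => simp only [map_add, add_mul, hu, hv]
  have h1 := congrArg (fun u => (TensorProduct.lid k L)
    ((LinearMap.rTensor L (Coalgebra.counit (R := k))) u)) hz2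
  simp only [key] at h1
  simpa [hz1, Coalgebra.rTensor_counit_comul] using h1.symm

lemma lam_of_comul {lam : H →ₗ[k] k} (hl1 : lam 1 = 1)
    (hl2 : ∀ g h : H,
      lam h * lam g
        = LinearMap.mul' k k
            ((TensorProduct.map lam (lam ∘ₗ LinearMap.mulRight k g))
              (Coalgebra.comul (R := k) h))) (h : H) :
    LinearMap.mul' k k ((TensorProduct.map lam lam) (Coalgebra.comul (R := k) h)) = lam h := by
  have := hl2 1 h
  have e : lam ∘ₗ LinearMap.mulRight k (1 : H) = lam := by
    ext a; simp
  rw [e, hl1, mul_one] at this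
  exact this.symm

end Helpers

section Helpers2

variable {k H L : Type*} [Field k] [Ring H] [HopfAlgebra k H] [Ring L] [HopfAlgebra k L]

lemma tmul_left_cancel {v w : L} (hvw : (1 : H) ⊗ₜ[k] v = (1 : H) ⊗ₜ[k] w) : v = w := by
  have := congrArg (fun u => (TensorProduct.lid k L)
    ((LinearMap.rTensor L (Coalgebra.counit (R := k))) u)) hvw
  simpa using this

lemma tmul_right_cancel {z : L} (hz1 : Coalgebra.counit (R := k) z = 1)
    {u w : H} (huw : u ⊗ₜ[k] z = w ⊗ₜ[k] z) : u = w := by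
  have := congrArg (fun t => (TensorProduct.rid k H)
    ((LinearMap.lTensor H (Coalgebra.counit (R := k))) t)) huw
  simpa [hz1] using this

lemma isQuasiAbelian_iff (lam : H →ₗ[k] k) (z : L) :
    IsQuasiAbelian k H L ((LinearMap.lsmul k L) ∘ₗ lam) ((TensorProduct.mk k H L).flip z)
      ↔ ∀ (h : H) (x : L),
        ((TensorProduct.lid k H) ((LinearMap.rTensor H lam) (Coalgebra.comul (R := k) h)))
            ⊗ₜ[k] (x * z)
          = ((TensorProduct.rid k H) ((LinearMap.lTensor H lam) (Coalgebra.comul (R := k) h)))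
            ⊗ₜ[k] (z * x) := by
  have keyL : ∀ x : L,
      (((LinearMap.lTensor H (LinearMap.mul' k L))
        ∘ₗ (TensorProduct.assoc k H L L).toLinearMap
        ∘ₗ (LinearMap.rTensor L (TensorProduct.comm k L H).toLinearMap)
        ∘ₗ (TensorProduct.assoc k L H L).symm.toLinearMap)
        ∘ₗ (TensorProduct.map ((((LinearMap.lsmul k L) ∘ₗ lam)).flip x)
              ((TensorProduct.mk k H L).flip z)) : H ⊗[k] H →ₗ[k] H ⊗[k] L)
      = ((TensorProduct.mk k H L).flip (x * z)) ∘ₗ (TensorProduct.lid k H).toLinearMap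
          ∘ₗ (LinearMap.rTensor H lam) := by
    intro x
    apply TensorProduct.ext'
    intro a b
    simp [smul_tmul', TensorProduct.assoc_symm_tmul]
  have keyR : ∀ x : L,
      (((LinearMap.lTensor H (LinearMap.mul' k L))
        ∘ₗ (TensorProduct.assoc k H L L).toLinearMap)
        ∘ₗ (TensorProduct.map ((TensorProduct.mk k H L).flip z)
              ((((LinearMap.lsmul k L) ∘ₗ lam)).flip x)) : H ⊗[k] H →ₗ[k] H ⊗[k] L)
      = ((TensorProduct.mk k H L).flip (z * x)) ∘ₗ (TensorProduct.rid k H).toLinearMap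
          ∘ₗ (LinearMap.lTensor H lam) := by
    intro x
    apply TensorProduct.ext'
    intro a b
    simp [smul_tmul', tmul_smul]
  constructor
  · intro hqa h x
    have := hqa h x
    rw [← LinearMap.comp_apply, ← LinearMap.comp_apply, ← LinearMap.comp_apply,
        ← LinearMap.comp_apply] at this
    rw [keyL x, keyR x] at this
    simpa using this
  · intro hc h x
    rw [← LinearMap.comp_apply, ← LinearMap.comp_apply, ← LinearMap.comp_apply,
        ← LinearMap.comp_apply, keyL x, keyR x]
    simpa using hc h x

end Helpers2

section Helpers3

variable {k H L : Type*} [Field k] [Ring H] [HopfAlgebra k H] [Ring L] [HopfAlgebra k L]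

lemma isPartialAction_scalar (lam : H →ₗ[k] k) (hl1 : lam 1 = 1)
    (hl2 : ∀ g h : H,
      lam h * lam g
        = LinearMap.mul' k k
            ((TensorProduct.map lam (lam ∘ₗ LinearMap.mulRight k g))
              (Coalgebra.comul (R := k) h))) :
    IsPartialAction k H L ((LinearMap.lsmul k L) ∘ₗ lam) := by
  constructor
  · intro a; simp [hl1]
  · intro h a b
    have key : (LinearMap.mul' k L) ∘ₗ
        (TensorProduct.map ((((LinearMap.lsmul k L) ∘ₗ lam)).flip a)
          ((((LinearMap.lsmul k L) ∘ₗ lam)).flip b))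
        = LinearMap.smulRight (LinearMap.mul' k k ∘ₗ TensorProduct.map lam lam) (a * b) := by
      apply TensorProduct.ext'
      intro c d
      simp [smul_mul_assoc, mul_smul_comm, mul_smul]
      rw [smul_comm]
    conv_rhs => rw [← LinearMap.comp_apply]
    rw [key]
    simp [lam_of_comul hl1 hl2 h]
  · intro h g a
    have key : (LinearMap.mul' k L) ∘ₗ
        (TensorProduct.map ((((LinearMap.lsmul k L) ∘ₗ lam)).flip 1)
          (((((LinearMap.lsmul k L) ∘ₗ lam)).flip a) ∘ₗ (LinearMap.mulRight k g)))
        = LinearMap.smulRight (LinearMap.mul' k k ∘ₗ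
            TensorProduct.map lam (lam ∘ₗ LinearMap.mulRight k g)) a := by
      apply TensorProduct.ext'
      intro c d
      simp [smul_mul_assoc, mul_smul_comm, mul_smul]
      rw [smul_comm]
    conv_rhs => rw [← LinearMap.comp_apply]
    rw [key]
    simp only [LinearMap.smulRight_apply, LinearMap.coe_comp, Function.comp_apply,
      LinearMap.lsmul_apply]
    rw [← hl2 g h, mul_smul]

lemma lmul_assoc_tmul (u : L ⊗[k] L) (y : L) :
    (LinearMap.lTensor L (LinearMap.mul' k L)) ((TensorProduct.assoc k L L L) (u ⊗ₜ[k] y))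
      = (LinearMap.lTensor L (LinearMap.mulRight k y)) u := by
  induction u with
  | zero =>
      rw [zero_tmul, (TensorProduct.assoc k L L L).map_zero, LinearMap.map_zero,
        LinearMap.map_zero]
  | tmul p q => simp only [TensorProduct.assoc_tmul, LinearMap.lTensor_tmul,
      LinearMap.mul'_apply, LinearMap.mulRight_apply]
  | add u v hu hv => simp only [add_tmul, map_add, hu, hv]

lemma isPartialCoaction_scalar (z : L) (hz1 : Coalgebra.counit (R := k) z = 1)
    (hz2 : z ⊗ₜ[k] z = Coalgebra.comul (R := k) z * ((1 : L) ⊗ₜ[k] z)) :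
    IsPartialCoaction k L H ((TensorProduct.mk k H L).flip z) := by
  have hzz := z_idem (k := k) (L := L) hz1 hz2
  have keyP : coactPairMul k L H ((TensorProduct.mk k H L).flip z)
      = (TensorProduct.mk k (H ⊗[k] H) L).flip z := by
    apply TensorProduct.ext'
    intro a b
    simp [coactPairMul, hzz]
  have keyR : ((TensorProduct.assoc k H L L).symm.toLinearMap
      ∘ₗ (LinearMap.lTensor H
          ((LinearMap.lTensor L (LinearMap.mul' k L))
            ∘ₗ (TensorProduct.assoc k L L L).toLinearMap))
      ∘ₗ (TensorProduct.assoc k H (L ⊗[k] L) L).toLinearMap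
      ∘ₗ (TensorProduct.map
            ((LinearMap.lTensor H (Coalgebra.comul (R := k)))
              ∘ₗ ((TensorProduct.mk k H L).flip z))
            ((TensorProduct.lid k L).toLinearMap
              ∘ₗ (LinearMap.rTensor L (Coalgebra.counit (R := k)))
              ∘ₗ ((TensorProduct.mk k H L).flip z))))
      = ((TensorProduct.mk k (H ⊗[k] L) L).flip z)
          ∘ₗ ((TensorProduct.mk k H L).flip z)
          ∘ₗ (TensorProduct.rid k H).toLinearMap
          ∘ₗ (LinearMap.lTensor H (Coalgebra.counit (R := k))) := by
    apply TensorProduct.ext'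
    intro a b
    simp only [TensorProduct.map_tmul, LinearMap.coe_comp, Function.comp_apply,
      LinearEquiv.coe_coe, TensorProduct.mk_apply, LinearMap.flip_apply,
      LinearMap.lTensor_tmul, LinearMap.rTensor_tmul, TensorProduct.lid_tmul,
      TensorProduct.rid_tmul, tmul_smul, map_smul, TensorProduct.assoc_tmul,
      TensorProduct.assoc_symm_tmul, smul_tmul']
    rw [lmul_assoc_tmul, mulRight_tensor_eq, ← hz2]
    simp [TensorProduct.assoc_symm_tmul, smul_tmul']
  constructor
  · intro c; simp [hz1]
  · intro c
    rw [keyP]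
    simp
  · intro c
    rw [show coactRight k L H ((TensorProduct.mk k H L).flip z) c
        = ((TensorProduct.assoc k H L L).symm.toLinearMap
            ∘ₗ (LinearMap.lTensor H
                ((LinearMap.lTensor L (LinearMap.mul' k L))
                  ∘ₗ (TensorProduct.assoc k L L L).toLinearMap))
            ∘ₗ (TensorProduct.assoc k H (L ⊗[k] L) L).toLinearMap
            ∘ₗ (TensorProduct.map
                  ((LinearMap.lTensor H (Coalgebra.comul (R := k)))
                    ∘ₗ ((TensorProduct.mk k H L).flip z))
                  ((TensorProduct.lid k L).toLinearMap
                    ∘ₗ (LinearMap.rTensor L (Coalgebra.counit (R := k)))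
                    ∘ₗ ((TensorProduct.mk k H L).flip z))))
            (Coalgebra.comul (R := k) c) from rfl, keyR]
    simp [Coalgebra.lTensor_counit_comul]

end Helpers3

section Helpers4

variable {k H L : Type*} [Field k] [Ring H] [HopfAlgebra k H] [Ring L] [HopfAlgebra k L]

lemma mpLHS_apply (lam : H →ₗ[k] k) (z : L) (g h : H) (x : L) :
    mpLHS k ((LinearMap.lsmul k L) ∘ₗ lam) ((TensorProduct.mk k H L).flip z) g x h
      = ((TensorProduct.lid k H) ((LinearMap.rTensor H lam) (Coalgebra.comul (R := k) h)) * g)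
          ⊗ₜ[k] ((LinearMap.lTensor L (LinearMap.mulRight k z)) (Coalgebra.comul (R := k) x)) := by
  have key : (psiMap k ∘ₗ (TensorProduct.map
        ((Coalgebra.comul (R := k)) ∘ₗ ((LinearMap.lsmul k L) ∘ₗ lam).flip x)
        (((TensorProduct.mk k H L).flip z) ∘ₗ LinearMap.mulRight k g))
        : H ⊗[k] H →ₗ[k] H ⊗[k] (L ⊗[k] L))
      = ((TensorProduct.mk k H (L ⊗[k] L)).flip
            ((LinearMap.lTensor L (LinearMap.mulRight k z)) (Coalgebra.comul (R := k) x)))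
          ∘ₗ LinearMap.mulRight k g ∘ₗ (TensorProduct.lid k H).toLinearMap
          ∘ₗ LinearMap.rTensor H lam := by
    apply TensorProduct.ext'
    intro a b
    simp only [LinearMap.coe_comp, Function.comp_apply, LinearEquiv.coe_coe,
      TensorProduct.map_tmul, LinearMap.flip_apply, LinearMap.lsmul_apply,
      LinearMap.rTensor_tmul, TensorProduct.lid_tmul, TensorProduct.mk_apply,
      LinearMap.mulRight_apply, map_smul, smul_mul_assoc]
    rw [← smul_tmul', map_smul, psiMap_tmul]
  rw [show mpLHS k ((LinearMap.lsmul k L) ∘ₗ lam) ((TensorProduct.mk k H L).flip z) g x h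
      = (psiMap k ∘ₗ (TensorProduct.map
          ((Coalgebra.comul (R := k)) ∘ₗ ((LinearMap.lsmul k L) ∘ₗ lam).flip x)
          (((TensorProduct.mk k H L).flip z) ∘ₗ LinearMap.mulRight k g)))
          (Coalgebra.comul (R := k) h) from rfl, key]
  simp

lemma bAssemble_eq (lam : H →ₗ[k] k) (z : L) :
    bAssemble k ((LinearMap.lsmul k L) ∘ₗ lam) ((TensorProduct.mk k H L).flip z)
      = (TensorProduct.lid k (L ⊗[k] L)).toLinearMap
          ∘ₗ (TensorProduct.map (LinearMap.mul' k k ∘ₗ TensorProduct.map lam lam)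
                (LinearMap.lTensor L (LinearMap.mulLeft k z))) := by
  apply TensorProduct.ext_fourfold'
  intro a b p q
  simp only [bAssemble, phiB, actT, swapR, LinearMap.coe_comp, Function.comp_apply,
    LinearEquiv.coe_coe, TensorProduct.tensorTensorTensorComm_tmul, TensorProduct.map_tmul,
    LinearMap.rTensor_tmul, LinearMap.lTensor_tmul, TensorProduct.assoc_tmul,
    TensorProduct.assoc_symm_tmul, TensorProduct.comm_tmul, TensorProduct.mk_apply,
    LinearMap.flip_apply, LinearMap.lsmul_apply, TensorProduct.lift.tmul,
    LinearMap.mul'_apply, LinearMap.mulLeft_apply, TensorProduct.lid_tmul,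
    LinearMap.mulRight_apply, tmul_smul, map_smul, smul_tmul']
  rw [smul_smul, mul_comm (lam b) (lam a)]

lemma betaMap_apply (lam : H →ₗ[k] k) (z : L)
    (hl1 : lam 1 = 1)
    (hl2 : ∀ g h : H,
      lam h * lam g
        = LinearMap.mul' k k
            ((TensorProduct.map lam (lam ∘ₗ LinearMap.mulRight k g))
              (Coalgebra.comul (R := k) h))) (x : L) (a : H) :
    betaMap k ((LinearMap.lsmul k L) ∘ₗ lam) ((TensorProduct.mk k H L).flip z) x a
      = lam a • ((LinearMap.lTensor L (LinearMap.mulLeft k z)) (Coalgebra.comul (R := k) x)) := by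
  rw [show betaMap k ((LinearMap.lsmul k L) ∘ₗ lam) ((TensorProduct.mk k H L).flip z) x a
      = bAssemble k ((LinearMap.lsmul k L) ∘ₗ lam) ((TensorProduct.mk k H L).flip z)
          ((Coalgebra.comul (R := k) a) ⊗ₜ[k] (Coalgebra.comul (R := k) x)) from rfl,
    bAssemble_eq]
  simp only [LinearMap.coe_comp, Function.comp_apply, LinearEquiv.coe_coe,
    TensorProduct.map_tmul, TensorProduct.lid_tmul]
  rw [lam_of_comul hl1 hl2 a]

lemma gammaMap_apply (lam : H →ₗ[k] k) (z : L) (hzz : z * z = z) (g a : H) :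
    gammaMap k ((LinearMap.lsmul k L) ∘ₗ lam) ((TensorProduct.mk k H L).flip z) g a
      = ((TensorProduct.rid k H) ((LinearMap.lTensor H lam) (Coalgebra.comul (R := k) a)) * g)
          ⊗ₜ[k] z := by
  have key : (cAssemble k ((LinearMap.lsmul k L) ∘ₗ lam) ((TensorProduct.mk k H L).flip z)
        ∘ₗ ((TensorProduct.mk k (H ⊗[k] H) (H ⊗[k] L)).flip (g ⊗ₜ[k] z))
        : H ⊗[k] H →ₗ[k] H ⊗[k] L)
      = ((TensorProduct.mk k H L).flip z) ∘ₗ LinearMap.mulRight k g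
          ∘ₗ (TensorProduct.rid k H).toLinearMap ∘ₗ LinearMap.lTensor H lam := by
    apply TensorProduct.ext'
    intro a b
    simp only [cAssemble, phiC, actT, swapR, LinearMap.coe_comp, Function.comp_apply,
      LinearEquiv.coe_coe, TensorProduct.tensorTensorTensorComm_tmul, TensorProduct.map_tmul,
      LinearMap.rTensor_tmul, LinearMap.lTensor_tmul, TensorProduct.assoc_tmul,
      TensorProduct.assoc_symm_tmul, TensorProduct.comm_tmul, TensorProduct.mk_apply,
      LinearMap.flip_apply, LinearMap.lsmul_apply, TensorProduct.lift.tmul,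
      LinearMap.mul'_apply, LinearMap.mulRight_apply, TensorProduct.rid_tmul,
      tmul_smul, map_smul, smul_tmul', smul_mul_assoc]
    rw [hzz]
  rw [show gammaMap k ((LinearMap.lsmul k L) ∘ₗ lam) ((TensorProduct.mk k H L).flip z) g a
      = (cAssemble k ((LinearMap.lsmul k L) ∘ₗ lam) ((TensorProduct.mk k H L).flip z)
          ∘ₗ ((TensorProduct.mk k (H ⊗[k] H) (H ⊗[k] L)).flip (g ⊗ₜ[k] z)))
          (Coalgebra.comul (R := k) a) from rfl, key]
  simp

end Helpers4

section Helpers5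

variable {k H L : Type*} [Field k] [Ring H] [HopfAlgebra k H] [Ring L] [HopfAlgebra k L]

lemma mpRHS_apply (lam : H →ₗ[k] k) (z : L)
    (hl1 : lam 1 = 1)
    (hl2 : ∀ g h : H,
      lam h * lam g
        = LinearMap.mul' k k
            ((TensorProduct.map lam (lam ∘ₗ LinearMap.mulRight k g))
              (Coalgebra.comul (R := k) h)))
    (hzz : z * z = z) (g h : H) (x : L) :
    mpRHS k ((LinearMap.lsmul k L) ∘ₗ lam) ((TensorProduct.mk k H L).flip z) g x h
      = ((TensorProduct.lid k H) ((LinearMap.rTensor H lam)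
            ((LinearMap.lTensor H
              (((TensorProduct.rid k H).toLinearMap ∘ₗ LinearMap.lTensor H lam)
                ∘ₗ Coalgebra.comul (R := k))) (Coalgebra.comul (R := k) h))) * g)
          ⊗ₜ[k] ((LinearMap.lTensor L (LinearMap.mulRight k z))
              ((LinearMap.lTensor L (LinearMap.mulLeft k z)) (Coalgebra.comul (R := k) x))) := by
  have hbeta : betaMap k ((LinearMap.lsmul k L) ∘ₗ lam) ((TensorProduct.mk k H L).flip z) x
      = LinearMap.smulRight lam
          ((LinearMap.lTensor L (LinearMap.mulLeft k z)) (Coalgebra.comul (R := k) x)) :=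
    LinearMap.ext fun a => betaMap_apply lam z hl1 hl2 x a
  have hgamma : gammaMap k ((LinearMap.lsmul k L) ∘ₗ lam) ((TensorProduct.mk k H L).flip z) g
      = ((TensorProduct.mk k H L).flip z) ∘ₗ LinearMap.mulRight k g
          ∘ₗ (((TensorProduct.rid k H).toLinearMap ∘ₗ LinearMap.lTensor H lam)
                ∘ₗ Coalgebra.comul (R := k)) :=
    LinearMap.ext fun a => gammaMap_apply lam z hzz g a
  rw [show mpRHS k ((LinearMap.lsmul k L) ∘ₗ lam) ((TensorProduct.mk k H L).flip z) g x h
      = (psiMap k) ((TensorProduct.map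
          (betaMap k ((LinearMap.lsmul k L) ∘ₗ lam) ((TensorProduct.mk k H L).flip z) x)
          (gammaMap k ((LinearMap.lsmul k L) ∘ₗ lam) ((TensorProduct.mk k H L).flip z) g))
          (Coalgebra.comul (R := k) h)) from rfl, hbeta, hgamma]
  have key : (psiMap k ∘ₗ (TensorProduct.map
        (LinearMap.smulRight lam
          ((LinearMap.lTensor L (LinearMap.mulLeft k z)) (Coalgebra.comul (R := k) x)))
        (((TensorProduct.mk k H L).flip z) ∘ₗ LinearMap.mulRight k g
          ∘ₗ (((TensorProduct.rid k H).toLinearMap ∘ₗ LinearMap.lTensor H lam)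
                ∘ₗ Coalgebra.comul (R := k))))
        : H ⊗[k] H →ₗ[k] H ⊗[k] (L ⊗[k] L))
      = ((TensorProduct.mk k H (L ⊗[k] L)).flip
            ((LinearMap.lTensor L (LinearMap.mulRight k z))
              ((LinearMap.lTensor L (LinearMap.mulLeft k z)) (Coalgebra.comul (R := k) x))))
          ∘ₗ LinearMap.mulRight k g ∘ₗ (TensorProduct.lid k H).toLinearMap
          ∘ₗ LinearMap.rTensor H lam
          ∘ₗ LinearMap.lTensor H
              (((TensorProduct.rid k H).toLinearMap ∘ₗ LinearMap.lTensor H lam)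
                ∘ₗ Coalgebra.comul (R := k)) := by
    apply TensorProduct.ext'
    intro a b
    simp only [LinearMap.coe_comp, Function.comp_apply, LinearEquiv.coe_coe,
      TensorProduct.map_tmul, LinearMap.smulRight_apply, LinearMap.flip_apply,
      TensorProduct.mk_apply, LinearMap.mulRight_apply, LinearMap.lTensor_tmul,
      LinearMap.rTensor_tmul, TensorProduct.lid_tmul, smul_mul_assoc, map_smul]
    rw [← smul_tmul', map_smul, psiMap_tmul]
  rw [← LinearMap.comp_apply, key]
  simp only [LinearMap.coe_comp, Function.comp_apply, LinearEquiv.coe_coe,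
    TensorProduct.mk_apply, LinearMap.flip_apply, LinearMap.mulRight_apply]

lemma coassoc_lam (lam : H →ₗ[k] k)
    (hl1 : lam 1 = 1)
    (hl2 : ∀ g h : H,
      lam h * lam g
        = LinearMap.mul' k k
            ((TensorProduct.map lam (lam ∘ₗ LinearMap.mulRight k g))
              (Coalgebra.comul (R := k) h))) (h : H) :
    (TensorProduct.lid k H) ((LinearMap.rTensor H lam)
        ((LinearMap.lTensor H
          (((TensorProduct.lid k H).toLinearMap ∘ₗ LinearMap.rTensor H lam)
            ∘ₗ Coalgebra.comul (R := k))) (Coalgebra.comul (R := k) h)))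
      = (TensorProduct.lid k H) ((LinearMap.rTensor H lam) (Coalgebra.comul (R := k) h)) := by
  rw [LinearMap.lTensor_comp, LinearMap.comp_apply]
  rw [show (LinearMap.lTensor H (Coalgebra.comul (R := k))) (Coalgebra.comul (R := k) h)
      = (TensorProduct.assoc k H H H)
          ((LinearMap.rTensor H (Coalgebra.comul (R := k))) (Coalgebra.comul (R := k) h)) from
    (Coalgebra.coassoc_apply h).symm]
  have key : ((TensorProduct.lid k H).toLinearMap ∘ₗ LinearMap.rTensor H lam
        ∘ₗ LinearMap.lTensor H
            ((TensorProduct.lid k H).toLinearMap ∘ₗ LinearMap.rTensor H lam)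
        ∘ₗ (TensorProduct.assoc k H H H).toLinearMap
        : (H ⊗[k] H) ⊗[k] H →ₗ[k] H)
      = (TensorProduct.lid k H).toLinearMap
          ∘ₗ LinearMap.rTensor H (LinearMap.mul' k k ∘ₗ TensorProduct.map lam lam) := by
    apply TensorProduct.ext_threefold
    intro a b c
    simp only [LinearMap.coe_comp, Function.comp_apply, LinearEquiv.coe_coe,
      TensorProduct.assoc_tmul, LinearMap.lTensor_tmul, LinearMap.rTensor_tmul,
      TensorProduct.lid_tmul, LinearMap.mul'_apply, TensorProduct.map_tmul,
      map_smul, smul_smul]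
  have := LinearMap.congr_fun key
    ((LinearMap.rTensor H (Coalgebra.comul (R := k))) (Coalgebra.comul (R := k) h))
  simp only [LinearMap.coe_comp, Function.comp_apply, LinearEquiv.coe_coe] at this
  rw [this, ← LinearMap.comp_apply, ← LinearMap.rTensor_comp]
  have e : (LinearMap.mul' k k ∘ₗ TensorProduct.map lam lam) ∘ₗ (Coalgebra.comul (R := k)) = lam :=
    LinearMap.ext fun a => lam_of_comul hl1 hl2 a
  rw [e]

end Helpers5


/-- Lemma 3.6: let `λ : H → k` and `z ∈ L` be as in Examples 2.2 and 2.4,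
with partial action `h ⇀ x = λ(h)x` and partial coaction `ρ(h) = h ⊗ z`.  Then `(H, L)` is a
quasi-abelian partial matched pair if and only if `z` is central in `L` and
`Σ λ(h₁)h₂ = Σ h₁λ(h₂)` for all `h ∈ H`. -/
theorem quasiAbelian_partialMatchedPair_scalar_iff
    {k H L : Type*} [Field k] [Ring H] [HopfAlgebra k H] [Ring L] [HopfAlgebra k L]
    (lam : H →ₗ[k] k) (z : L)
    (hl1 : lam 1 = 1)
    (hl2 : ∀ g h : H,
      lam h * lam g
        = LinearMap.mul' k k
            ((TensorProduct.map lam (lam ∘ₗ LinearMap.mulRight k g))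
              (Coalgebra.comul (R := k) h)))
    (hz1 : Coalgebra.counit (R := k) z = 1)
    (hz2 : z ⊗ₜ[k] z = Coalgebra.comul (R := k) z * ((1 : L) ⊗ₜ[k] z)) :
    (IsPartialMatchedPair k H L ((LinearMap.lsmul k L) ∘ₗ lam) ((TensorProduct.mk k H L).flip z)
        ∧ IsQuasiAbelian k H L ((LinearMap.lsmul k L) ∘ₗ lam) ((TensorProduct.mk k H L).flip z))
      ↔ ((∀ x : L, z * x = x * z) ∧
          ∀ h : H,
            (TensorProduct.lid k H) ((LinearMap.rTensor H lam) (Coalgebra.comul (R := k) h))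
              = (TensorProduct.rid k H)
                  ((LinearMap.lTensor H lam) (Coalgebra.comul (R := k) h))) := by
  have hzz := z_idem (k := k) (L := L) hz1 hz2
  constructor
  · rintro ⟨-, hqa⟩
    rw [isQuasiAbelian_iff] at hqa
    constructor
    · intro x
      have h1 := hqa 1 x
      rw [Bialgebra.comul_one, Algebra.TensorProduct.one_def] at h1
      simp only [LinearMap.rTensor_tmul, LinearMap.lTensor_tmul, TensorProduct.lid_tmul,
        TensorProduct.rid_tmul, hl1, one_smul] at h1
      exact (tmul_left_cancel h1).symm
    · intro h
      have h1 := hqa h 1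
      rw [mul_one, one_mul] at h1
      exact tmul_right_cancel hz1 h1
  · rintro ⟨hc, ht⟩
    refine ⟨⟨isPartialAction_scalar lam hl1 hl2, isPartialCoaction_scalar z hz1 hz2,
      ?_, ?_, ?_⟩, ?_⟩
    · intro h g x
      rw [mpLHS_apply, mpRHS_apply lam z hl1 hl2 hzz g h x]
      have e1 : (((TensorProduct.rid k H).toLinearMap ∘ₗ LinearMap.lTensor H lam)
            ∘ₗ Coalgebra.comul (R := k))
          = (((TensorProduct.lid k H).toLinearMap ∘ₗ LinearMap.rTensor H lam)
            ∘ₗ Coalgebra.comul (R := k)) := by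
        apply LinearMap.ext
        intro a
        exact (ht a).symm
      rw [e1, coassoc_lam lam hl1 hl2 h]
      have e2 : (LinearMap.lTensor L (LinearMap.mulRight k z))
            ((LinearMap.lTensor L (LinearMap.mulLeft k z)) (Coalgebra.comul (R := k) x))
          = (LinearMap.lTensor L (LinearMap.mulRight k z)) (Coalgebra.comul (R := k) x) := by
        have e3 : LinearMap.mulRight k z ∘ₗ LinearMap.mulLeft k z
            = (LinearMap.mulRight k z : L →ₗ[k] L) := by
          apply LinearMap.ext
          intro y
          simp only [LinearMap.coe_comp, Function.comp_apply, LinearMap.mulLeft_apply,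
            LinearMap.mulRight_apply]
          rw [hc y, mul_assoc, hzz]
        rw [← LinearMap.comp_apply, ← LinearMap.lTensor_comp, e3]
      rw [e2]
    · intro h x
      simp only [LinearMap.coe_comp, Function.comp_apply, LinearMap.lsmul_apply,
        map_smul, smul_eq_mul, map_one, Bialgebra.counit_one, mul_one]
    · simp [coactCounit, Bialgebra.counit_one]
    · rw [isQuasiAbelian_iff]
      intro h x
      rw [ht h, hc x]

end PartialHopf
end

section
/- Let (H, L) be a partial matched pair. Then (H, L) is a (global) matched pair if and only if (i) h ⇀ 1_L = ε_H(h)1_L and (ii) ε_H(h⁰)h¹ = ε_H(h)1_L for all h ∈ H. -/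
open TensorProduct LinearMap

namespace PartialHopf
variable (k : Type*) [Field k]

section Global
variable (H A : Type*) [Ring H] [HopfAlgebra k H] [Ring A] [Algebra k A]

/-- `A` is a (global) left `H`-module algebra. -/
structure IsModuleAlgebra (act : H →ₗ[k] A →ₗ[k] A) : Prop where
  one_act : ∀ a : A, act 1 a = a
  act_act' : ∀ (h g : H) (a : A), act h (act g a) = act (h * g) a
  act_mul : ∀ (h : H) (a b : A), act h (a * b)
      = LinearMap.mul' k A
          ((TensorProduct.map (act.flip a) (act.flip b)) (Coalgebra.comul (R := k) h))
  act_one : ∀ h : H, act h 1 = Coalgebra.counit (R := k) h • (1 : A)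

variable (C : Type*) [AddCommGroup C] [Module k C] [Coalgebra k C]

/-- `C` is a (global) right `H`-comodule coalgebra. -/
structure IsComoduleCoalgebra (ρ : C →ₗ[k] C ⊗[k] H) : Prop where
  tensor_counit : ∀ c : C,
    (TensorProduct.rid k C) ((LinearMap.lTensor C (Coalgebra.counit (R := k))) (ρ c)) = c
  coassoc : ∀ c : C,
    (LinearMap.rTensor H ρ) (ρ c)
      = (TensorProduct.assoc k C H H).symm
          ((LinearMap.lTensor C (Coalgebra.comul (R := k))) (ρ c))
  comul_coact : ∀ c : C,
    (LinearMap.rTensor H (Coalgebra.comul (R := k))) (ρ c)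
      = coactPairMul k H C ρ (Coalgebra.comul (R := k) c)
  counit_coact : ∀ c : C,
    (TensorProduct.lid k H) ((LinearMap.rTensor H (Coalgebra.counit (R := k))) (ρ c))
      = Coalgebra.counit (R := k) c • (1 : H)

variable (L : Type*) [Ring L] [HopfAlgebra k L]

/-- `h₂ ↦ g⁰ ⊗ (h₂ ⇀ g¹)` for fixed `g`. -/
noncomputable def coactActMap (act : H →ₗ[k] L →ₗ[k] L) (ρ : H →ₗ[k] H ⊗[k] L) (g : H) :
    H →ₗ[k] H ⊗[k] L :=
  (LinearMap.lTensor H (actT k act))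
    ∘ₗ (TensorProduct.leftComm k H H L).toLinearMap
    ∘ₗ ((TensorProduct.mk k H (H ⊗[k] L)).flip (ρ g))

/-- Definition 2.6 (Takeuchi): `(H, L)` is a matched pair of Hopf algebras. -/
structure IsMatchedPair (act : H →ₗ[k] L →ₗ[k] L) (ρ : H →ₗ[k] H ⊗[k] L) : Prop where
  moduleAlgebra : IsModuleAlgebra k H L act
  comoduleCoalgebra : IsComoduleCoalgebra k L H ρ
  coact_mul : ∀ h g : H,
    ρ (h * g) = LinearMap.mul' k (H ⊗[k] L)
      ((TensorProduct.map ρ (coactActMap k H L act ρ g)) (Coalgebra.comul (R := k) h))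
  comul_act : ∀ (h : H) (x : L),
    Coalgebra.comul (R := k) (act h x) = betaMap k act ρ x h

end Global

set_option synthInstance.maxHeartbeats 400000
set_option maxHeartbeats 1000000

section Aux

variable {k H L : Type*} [Field k] [Ring H] [HopfAlgebra k H] [Ring L] [HopfAlgebra k L]

/-- `a ⊗ y ↦ ε(a) • y`. -/
noncomputable def epsR (k : Type*) [Field k] (A B : Type*) [AddCommGroup A] [Module k A]
    [Coalgebra k A] [AddCommGroup B] [Module k B] : A ⊗[k] B →ₗ[k] B :=
  (TensorProduct.lid k B).toLinearMap ∘ₗ LinearMap.rTensor B (Coalgebra.counit (R := k))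

@[simp] lemma epsR_tmul {A B : Type*} [AddCommGroup A] [Module k A]
    [Coalgebra k A] [AddCommGroup B] [Module k B] (a : A) (y : B) :
    epsR k A B (a ⊗ₜ[k] y) = Coalgebra.counit (R := k) a • y := by
  simp [epsR]

lemma coactCounit_eq (ρ : H →ₗ[k] H ⊗[k] L) (h : H) :
    coactCounit k ρ h = epsR k H L (ρ h) := rfl

lemma repr_counit_smul_right {h : H} {ι : Type*} (r : Coalgebra.Repr k h ι) :
    ∑ i ∈ r.index, Coalgebra.counit (R := k) (r.left i) • r.right i = h := by
  have h1 := congrArg (TensorProduct.lid k H) (Coalgebra.sum_counit_tmul_eq r)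
  simp only [map_sum, TensorProduct.lid_tmul, one_smul] at h1
  exact h1

lemma repr_counit_smul_left {h : H} {ι : Type*} (r : Coalgebra.Repr k h ι) :
    ∑ i ∈ r.index, Coalgebra.counit (R := k) (r.right i) • r.left i = h := by
  have h1 := congrArg (TensorProduct.rid k H) (Coalgebra.sum_tmul_counit_eq r)
  simp only [map_sum, TensorProduct.rid_tmul, one_smul] at h1
  exact h1

variable (act : H →ₗ[k] L →ₗ[k] L) (ρ : H →ₗ[k] H ⊗[k] L)

@[simp] lemma actT_tmul (h : H) (x : L) : actT k act (h ⊗ₜ[k] x) = act h x := rfl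

@[simp] lemma swapR_tmul {M N P : Type*} [AddCommGroup M] [AddCommGroup N] [AddCommGroup P]
    [Module k M] [Module k N] [Module k P] (m : M) (n : N) (p : P) :
    swapR k M N P ((m ⊗ₜ[k] n) ⊗ₜ[k] p) = (m ⊗ₜ[k] p) ⊗ₜ[k] n := by
  simp [swapR]

@[simp] lemma psiMap_tmul_s5 (x₁ x₂ : L) (a : H) (y : L) :
    psiMap k ((x₁ ⊗ₜ[k] x₂) ⊗ₜ[k] (a ⊗ₜ[k] y)) = a ⊗ₜ[k] (x₁ ⊗ₜ[k] (x₂ * y)) := by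
  simp [psiMap, TensorProduct.tensorTensorTensorComm_tmul]

lemma rTensor_mul'_swapR_one (t : H ⊗[k] L) :
    LinearMap.rTensor L (LinearMap.mul' k H) (swapR k H L H (t ⊗ₜ[k] (1 : H))) = t := by
  induction t using TensorProduct.induction_on with
  | zero => rw [TensorProduct.zero_tmul, map_zero, map_zero]
  | tmul r s => simp [mul_one]
  | add x y hx hy => simp only [TensorProduct.add_tmul, map_add, hx, hy]

lemma phiC_tmul_one (a : H) : phiC k ρ (a ⊗ₜ[k] (1 : H)) = ρ a := by
  simp only [phiC, LinearMap.comp_apply, LinearMap.rTensor_tmul]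
  exact rTensor_mul'_swapR_one (ρ a)

lemma lTensor_mul'_assoc_one (t : H ⊗[k] L) :
    LinearMap.lTensor H (LinearMap.mul' k L)
      ((TensorProduct.assoc k H L L) (t ⊗ₜ[k] (1 : L))) = t := by
  induction t using TensorProduct.induction_on with
  | zero => rw [TensorProduct.zero_tmul, LinearEquiv.map_zero, map_zero]
  | tmul r s => simp [mul_one]
  | add x y hx hy => simp only [TensorProduct.add_tmul, map_add, hx, hy]

lemma cAssemble_tmul_one
    (hone : ∀ h : H, act h 1 = Coalgebra.counit (R := k) h • (1 : L)) (a b : H) :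
    cAssemble k act ρ ((a ⊗ₜ[k] b) ⊗ₜ[k] ((1 : H) ⊗ₜ[k] (1 : L)))
      = Coalgebra.counit (R := k) b • ρ a := by
  simp only [cAssemble, LinearMap.comp_apply, LinearEquiv.coe_coe,
    TensorProduct.tensorTensorTensorComm_tmul, TensorProduct.map_tmul, actT_tmul, hone b,
    phiC_tmul_one]
  rw [TensorProduct.tmul_smul, map_smul, map_smul, lTensor_mul'_assoc_one]

lemma gammaMap_one
    (hone : ∀ h : H, act h 1 = Coalgebra.counit (R := k) h • (1 : L))
    (hρ1 : ρ (1 : H) = (1 : H) ⊗ₜ[k] (1 : L)) :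
    gammaMap k act ρ 1 = ρ := by
  apply LinearMap.ext; intro h
  set r := Coalgebra.Repr.arbitrary k h
  simp only [gammaMap, LinearMap.comp_apply, LinearMap.flip_apply, TensorProduct.mk_apply,
    hρ1, ← r.eq, TensorProduct.sum_tmul, map_sum, cAssemble_tmul_one act ρ hone]
  simp only [← map_smul, ← map_sum, repr_counit_smul_left r]

lemma rTensor_actT_swapR_one
    (hone : ∀ h : H, act h 1 = Coalgebra.counit (R := k) h • (1 : L)) (t : H ⊗[k] L) :
    LinearMap.rTensor L (actT k act) (swapR k H L L (t ⊗ₜ[k] (1 : L)))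
      = (1 : L) ⊗ₜ[k] epsR k H L t := by
  induction t using TensorProduct.induction_on with
  | zero => rw [TensorProduct.zero_tmul, map_zero, map_zero, map_zero, TensorProduct.tmul_zero]
  | tmul r s => simp [hone r, TensorProduct.smul_tmul]
  | add x y hx hy =>
      simp only [TensorProduct.add_tmul, map_add, hx, hy, TensorProduct.tmul_add]

lemma phiB_tmul_one
    (hone : ∀ h : H, act h 1 = Coalgebra.counit (R := k) h • (1 : L)) (c : H) :
    phiB k act ρ (c ⊗ₜ[k] (1 : L)) = (1 : L) ⊗ₜ[k] coactCounit k ρ c := by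
  simp only [phiB, LinearMap.comp_apply, LinearMap.rTensor_tmul]
  rw [rTensor_actT_swapR_one act hone (ρ c), coactCounit_eq]

lemma bAssemble_tmul_one
    (hone : ∀ h : H, act h 1 = Coalgebra.counit (R := k) h • (1 : L))
    (hco : ∀ h : H, coactCounit k ρ h = Coalgebra.counit (R := k) h • (1 : L))
    (c d : H) :
    bAssemble k act ρ ((c ⊗ₜ[k] d) ⊗ₜ[k] ((1 : L) ⊗ₜ[k] (1 : L)))
      = (Coalgebra.counit (R := k) c * Coalgebra.counit (R := k) d)
          • ((1 : L) ⊗ₜ[k] (1 : L)) := by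
  simp only [bAssemble, LinearMap.comp_apply, LinearEquiv.coe_coe,
    TensorProduct.tensorTensorTensorComm_tmul, TensorProduct.map_tmul, actT_tmul, hone d,
    phiB_tmul_one act ρ hone, hco c]
  simp [TensorProduct.smul_tmul, TensorProduct.tmul_smul, smul_smul, mul_comm]

lemma counit_sum_mul {h : H} {ι : Type*} (r : Coalgebra.Repr k h ι) :
    ∑ i ∈ r.index,
        Coalgebra.counit (R := k) (r.left i) * Coalgebra.counit (R := k) (r.right i)
      = Coalgebra.counit (R := k) h := by
  have h2 := congrArg (Coalgebra.counit (R := k)) (repr_counit_smul_right r)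
  simpa [map_sum, smul_eq_mul] using h2

lemma betaMap_one
    (hone : ∀ h : H, act h 1 = Coalgebra.counit (R := k) h • (1 : L))
    (hco : ∀ h : H, coactCounit k ρ h = Coalgebra.counit (R := k) h • (1 : L))
    (h : H) :
    betaMap k act ρ (1 : L) h
      = Coalgebra.counit (R := k) h • ((1 : L) ⊗ₜ[k] (1 : L)) := by
  set r := Coalgebra.Repr.arbitrary k h
  simp only [betaMap, LinearMap.comp_apply, LinearMap.flip_apply, TensorProduct.mk_apply,
    Bialgebra.comul_one, Algebra.TensorProduct.one_def, ← r.eq, TensorProduct.sum_tmul,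
    map_sum, bAssemble_tmul_one act ρ hone hco]
  rw [← Finset.sum_smul, counit_sum_mul r]

lemma lTensor_mul'_assoc_one' {A : Type*} [AddCommGroup A] [Module k A] (t : A ⊗[k] L) :
    LinearMap.lTensor A (LinearMap.mul' k L)
      ((TensorProduct.assoc k A L L) (t ⊗ₜ[k] (1 : L))) = t := by
  induction t using TensorProduct.induction_on with
  | zero => rw [TensorProduct.zero_tmul, LinearEquiv.map_zero, map_zero]
  | tmul r s => simp [mul_one]
  | add x y hx hy => simp only [TensorProduct.add_tmul, map_add, LinearEquiv.map_add, hx, hy]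

lemma epsR_psiMap (w : L ⊗[k] L) (t : H ⊗[k] L) :
    epsR k H (L ⊗[k] L) (psiMap k (w ⊗ₜ[k] t))
      = (LinearMap.lTensor L (LinearMap.mul' k L))
          ((TensorProduct.assoc k L L L) (w ⊗ₜ[k] epsR k H L t)) := by
  induction w using TensorProduct.induction_on with
  | zero => rw [TensorProduct.zero_tmul, map_zero, map_zero, TensorProduct.zero_tmul,
      LinearEquiv.map_zero, map_zero]
  | tmul u v =>
      induction t using TensorProduct.induction_on with
      | zero => rw [TensorProduct.tmul_zero, map_zero, map_zero, map_zero,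
          TensorProduct.tmul_zero, LinearEquiv.map_zero, map_zero]
      | tmul c y => simp [TensorProduct.tmul_smul]
      | add s u' hs hu =>
          simp only [TensorProduct.tmul_add, map_add, hs, hu, LinearEquiv.map_add]
  | add s u' hs hu =>
      simp only [TensorProduct.add_tmul, map_add, hs, hu, LinearEquiv.map_add]

lemma lTensor_epsR_psiMap_one (t : H ⊗[k] L) :
    LinearMap.lTensor H (epsR k L L)
      (psiMap k (((1 : L) ⊗ₜ[k] (1 : L)) ⊗ₜ[k] t)) = t := by
  induction t using TensorProduct.induction_on with
  | zero => rw [TensorProduct.tmul_zero, map_zero, map_zero]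
  | tmul c y => simp
  | add s u hs hu => simp only [TensorProduct.tmul_add, map_add, hs, hu]

lemma d2_aux (s : H ⊗[k] L) (u : H) (v : L) :
    LinearMap.lTensor H (LinearMap.mul' k L)
      ((TensorProduct.assoc k H L L)
        ((LinearMap.rTensor L (LinearMap.mul' k H) (swapR k H L H (s ⊗ₜ[k] u))) ⊗ₜ[k] v))
      = LinearMap.mul' k (H ⊗[k] L) (s ⊗ₜ[k] (u ⊗ₜ[k] v)) := by
  induction s using TensorProduct.induction_on with
  | zero => simp only [TensorProduct.zero_tmul, LinearEquiv.map_zero, map_zero]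
  | tmul r w => simp [Algebra.TensorProduct.tmul_mul_tmul]
  | add x y hx hy =>
      simp only [TensorProduct.add_tmul, map_add, LinearEquiv.map_add, hx, hy]

lemma cAssemble_apply (a b : H) (t : H ⊗[k] L) :
    cAssemble k act ρ ((a ⊗ₜ[k] b) ⊗ₜ[k] t)
      = LinearMap.mul' k (H ⊗[k] L)
          (ρ a ⊗ₜ[k]
            (LinearMap.lTensor H (actT k act) ((TensorProduct.leftComm k H H L) (b ⊗ₜ[k] t)))) := by
  induction t using TensorProduct.induction_on with
  | zero => rw [TensorProduct.tmul_zero, map_zero, TensorProduct.tmul_zero,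
      LinearEquiv.map_zero, map_zero, TensorProduct.tmul_zero, map_zero]
  | tmul u y =>
      simp only [cAssemble, LinearMap.comp_apply, LinearEquiv.coe_coe,
        TensorProduct.tensorTensorTensorComm_tmul, TensorProduct.map_tmul, actT_tmul,
        phiC, LinearMap.rTensor_tmul, TensorProduct.leftComm_tmul, LinearMap.lTensor_tmul]
      exact d2_aux (ρ a) u (act b y)
  | add s u hs hu =>
      simp only [TensorProduct.tmul_add, map_add, LinearEquiv.map_add, hs, hu]

lemma gammaMap_apply_s5 (g h : H) :
    gammaMap k act ρ g h
      = LinearMap.mul' k (H ⊗[k] L)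
          ((TensorProduct.map ρ (coactActMap k H L act ρ g)) (Coalgebra.comul (R := k) h)) := by
  set r := Coalgebra.Repr.arbitrary k h
  simp only [gammaMap, LinearMap.comp_apply, LinearMap.flip_apply, TensorProduct.mk_apply,
    ← r.eq, TensorProduct.sum_tmul, map_sum, cAssemble_apply, coactActMap,
    TensorProduct.map_tmul, LinearEquiv.coe_coe]

lemma sum_counit_left_smul_map {M : Type*} [AddCommGroup M] [Module k M]
    (f : H →ₗ[k] M) {h : H} {ι : Type*} (r : Coalgebra.Repr k h ι) :
    ∑ i ∈ r.index, Coalgebra.counit (R := k) (r.left i) • f (r.right i) = f h := by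
  simp only [← map_smul, ← map_sum]
  rw [repr_counit_smul_right r]

lemma sum_counit_right_smul_map {M : Type*} [AddCommGroup M] [Module k M]
    (f : H →ₗ[k] M) {h : H} {ι : Type*} (r : Coalgebra.Repr k h ι) :
    ∑ i ∈ r.index, Coalgebra.counit (R := k) (r.right i) • f (r.left i) = f h := by
  simp only [← map_smul, ← map_sum]
  rw [repr_counit_smul_left r]

lemma act_act_glob (hpa : IsPartialAction k H L act)
    (hone : ∀ h : H, act h 1 = Coalgebra.counit (R := k) h • (1 : L))
    (h g : H) (a : L) : act h (act g a) = act (h * g) a := by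
  rw [hpa.act_act h g a]
  set r := Coalgebra.Repr.arbitrary k h
  simp only [← r.eq, map_sum, TensorProduct.map_tmul, LinearMap.comp_apply,
    LinearMap.flip_apply, LinearMap.mulRight_apply, LinearMap.mul'_apply, hone,
    smul_mul_assoc, one_mul]
  have : ∀ i ∈ r.index,
      Coalgebra.counit (R := k) (r.left i) • act (r.right i * g) a
        = Coalgebra.counit (R := k) (r.left i)
            • ((act.flip a) ∘ₗ (LinearMap.mulRight k g)) (r.right i) := by
    intro i _; simp
  rw [Finset.sum_congr rfl this, sum_counit_left_smul_map _ r]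
  simp

lemma hEpsρ
    (hco : ∀ h : H, coactCounit k ρ h = Coalgebra.counit (R := k) h • (1 : L)) :
    ∀ b : H, epsR k H L (ρ b) = Coalgebra.counit (R := k) b • (1 : L) := by
  intro b; rw [← coactCounit_eq]; exact hco b

lemma big_one (w : H ⊗[k] (L ⊗[k] L)) :
    LinearMap.lTensor H
        ((LinearMap.lTensor L (LinearMap.mul' k L)) ∘ₗ (TensorProduct.assoc k L L L).toLinearMap)
        ((TensorProduct.assoc k H (L ⊗[k] L) L) (w ⊗ₜ[k] (1 : L))) = w := by
  induction w using TensorProduct.induction_on with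
  | zero => simp only [TensorProduct.zero_tmul, LinearEquiv.map_zero, map_zero]
  | tmul hh z =>
      simp only [TensorProduct.assoc_tmul, LinearMap.lTensor_tmul, LinearMap.comp_apply,
        LinearEquiv.coe_coe, lTensor_mul'_assoc_one']
  | add x y hx hy =>
      simp only [TensorProduct.add_tmul, LinearEquiv.map_add, map_add, hx, hy]

lemma coassoc_glob (hpc : IsPartialCoaction k L H ρ)
    (hco : ∀ h : H, coactCounit k ρ h = Coalgebra.counit (R := k) h • (1 : L)) (c : H) :
    (LinearMap.rTensor L ρ) (ρ c)
      = (TensorProduct.assoc k H L L).symm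
          ((LinearMap.lTensor H (Coalgebra.comul (R := k))) (ρ c)) := by
  rw [hpc.coact_coact c]
  set r := Coalgebra.Repr.arbitrary k c
  have hco' : ∀ b : H,
      (TensorProduct.lid k L) ((LinearMap.rTensor L (Coalgebra.counit (R := k))) (ρ b))
        = Coalgebra.counit (R := k) b • (1 : L) := by
    intro b; have := hco b; simpa [coactCounit] using this
  simp only [coactRight, LinearMap.comp_apply, LinearEquiv.coe_coe, ← r.eq, map_sum,
    TensorProduct.map_tmul, hco']
  simp only [TensorProduct.tmul_smul, LinearEquiv.map_smul, map_smul, big_one]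
  exact sum_counit_right_smul_map
    ((TensorProduct.assoc k H L L).symm.toLinearMap
      ∘ₗ (LinearMap.lTensor H (Coalgebra.comul (R := k))) ∘ₗ ρ) r

lemma comul_act_glob (hpmp : IsPartialMatchedPair k H L act ρ)
    (hone : ∀ h : H, act h 1 = Coalgebra.counit (R := k) h • (1 : L))
    (hco : ∀ h : H, coactCounit k ρ h = Coalgebra.counit (R := k) h • (1 : L))
    (h : H) (x : L) :
    Coalgebra.comul (R := k) (act h x) = betaMap k act ρ x h := by
  have hρ1 : ρ (1 : H) = (1 : H) ⊗ₜ[k] (1 : L) := by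
    rw [hpmp.coact_one, hco 1, Bialgebra.counit_one, one_smul]
  have hc := hpmp.compat h 1 x
  have l : epsR k H (L ⊗[k] L) (mpLHS k act ρ 1 x h)
      = Coalgebra.comul (R := k) (act h x) := by
    set r := Coalgebra.Repr.arbitrary k h
    simp only [mpLHS, LinearMap.comp_apply, ← r.eq, map_sum, TensorProduct.map_tmul,
      LinearMap.mulRight_apply, mul_one, LinearMap.flip_apply, epsR_psiMap,
      hEpsρ ρ hco, TensorProduct.tmul_smul, LinearEquiv.map_smul, map_smul,
      lTensor_mul'_assoc_one']
    exact sum_counit_right_smul_map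
      ((Coalgebra.comul (R := k)) ∘ₗ act.flip x) r
  have rside : epsR k H (L ⊗[k] L) (mpRHS k act ρ 1 x h) = betaMap k act ρ x h := by
    set r := Coalgebra.Repr.arbitrary k h
    simp only [mpRHS, LinearMap.comp_apply, ← r.eq, map_sum, TensorProduct.map_tmul,
      gammaMap_one act ρ hone hρ1, epsR_psiMap, hEpsρ ρ hco, TensorProduct.tmul_smul,
      LinearEquiv.map_smul, map_smul, lTensor_mul'_assoc_one']
    exact sum_counit_right_smul_map (betaMap k act ρ x) r
  rw [← l, hc, rside]

lemma coact_mul_glob (hpmp : IsPartialMatchedPair k H L act ρ)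
    (hone : ∀ h : H, act h 1 = Coalgebra.counit (R := k) h • (1 : L))
    (hco : ∀ h : H, coactCounit k ρ h = Coalgebra.counit (R := k) h • (1 : L))
    (h g : H) :
    ρ (h * g) = LinearMap.mul' k (H ⊗[k] L)
      ((TensorProduct.map ρ (coactActMap k H L act ρ g)) (Coalgebra.comul (R := k) h)) := by
  have hc := hpmp.compat h g 1
  have QL : LinearMap.lTensor H (epsR k L L) (mpLHS k act ρ g 1 h) = ρ (h * g) := by
    set r := Coalgebra.Repr.arbitrary k h
    simp only [mpLHS, LinearMap.comp_apply, ← r.eq, map_sum, TensorProduct.map_tmul,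
      LinearMap.mulRight_apply, LinearMap.flip_apply, hone, map_smul,
      Bialgebra.comul_one, Algebra.TensorProduct.one_def, ← TensorProduct.smul_tmul',
      lTensor_epsR_psiMap_one]
    have := sum_counit_left_smul_map (ρ ∘ₗ LinearMap.mulRight k g) r
    simpa using this
  have QR : LinearMap.lTensor H (epsR k L L) (mpRHS k act ρ g 1 h)
      = gammaMap k act ρ g h := by
    set r := Coalgebra.Repr.arbitrary k h
    simp only [mpRHS, LinearMap.comp_apply, ← r.eq, map_sum, TensorProduct.map_tmul,
      betaMap_one act ρ hone hco, ← TensorProduct.smul_tmul', map_smul,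
      lTensor_epsR_psiMap_one]
    exact sum_counit_left_smul_map (gammaMap k act ρ g) r
  rw [← gammaMap_apply_s5, ← QR, ← hc, QL]

end Aux

/-- Theorem 3.4: a partial matched pair `(H, L)` is a (global) matched pair
if and only if (i) `h ⇀ 1_L = ε_H(h)1_L` and (ii) `Σ ε_H(h⁰)h¹ = ε_H(h)1_L` for all `h ∈ H`. -/
theorem isMatchedPair_iff_of_isPartialMatchedPair
    {k H L : Type*} [Field k] [Ring H] [HopfAlgebra k H] [Ring L] [HopfAlgebra k L]
    (act : H →ₗ[k] L →ₗ[k] L) (ρ : H →ₗ[k] H ⊗[k] L)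
    (hpmp : IsPartialMatchedPair k H L act ρ) :
    IsMatchedPair k H L act ρ
      ↔ ((∀ h : H, act h 1 = Coalgebra.counit (R := k) h • (1 : L)) ∧
          (∀ h : H, coactCounit k ρ h = Coalgebra.counit (R := k) h • (1 : L))) := by
  constructor
  · intro mp
    refine ⟨mp.moduleAlgebra.act_one, fun h => ?_⟩
    have := mp.comoduleCoalgebra.counit_coact h
    simpa [coactCounit] using this
  · rintro ⟨hone, hco⟩
    exact ⟨⟨hpmp.action.one_act, act_act_glob act hpmp.action hone, hpmp.action.act_mul, hone⟩,
      ⟨hpmp.coaction.tensor_counit, coassoc_glob ρ hpmp.coaction hco,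
        hpmp.coaction.comul_coact, fun c => by simpa [coactCounit] using hco c⟩,
      coact_mul_glob act ρ hpmp hone hco,
      comul_act_glob act ρ hpmp hone hco⟩

end PartialHopf
end
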